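/- Let 1 < s < 2 and let h : [0,1] → ℝ be continuous. Set c = (1/Γ(s)) ∫₀¹ (1−t)^{s−1} h(t) dt and define u : (0,1] → ℝ by u(x) = c x^{s−1} − (1/Γ(s)) ∫₀ˣ (x−t)^{s−1} h(t) dt. Then u(1) = 0, u(x) → 0 as x → 0⁺, and for every x ∈ (0,1) the function x ↦ (1/Γ(2−s)) ∫₀ˣ (x−t)^{1−s} u(t) dt is twice differentiable at x with second derivative equal to −h(x); that is, the Riemann–Liouville derivative of order s of u satisfies (₀ᴿDₓˢ u)(x) = −h(x) on (0,1). (With h = g(·,u(·)) − f, this is the solution representation u(x) = x^{s−1} (₀Iₓˢ(g(·,u)−f))(1) − (₀Iₓˢ(g(·,u)−f))(x) for the Riemann–Liouville two-point boundary value problem −₀ᴿDₓˢ u + g(x,u) = f, u(0) = u(1) = 0.) -/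

import Mathlib

/-!
Write `Iᵃ` for the Riemann–Liouville integral of order `a`, and extend `h` continuously to `ℝ`.
On `[0,1]`, `u = c·x^(s-1) - Iˢh`. The Beta integral gives `I^(2-s) x^(s-1) = Γ(s)·x`, and
Fubini on the triangle `0 < r ≤ t ≤ z` followed by the Beta integral in `t` gives the semigroup
law `I^(2-s) (Iˢh) = I²h = ∫₀ᶻ (z - r) h(r) dr`. Hence `I^(2-s) u = cΓ(s)·z - I²h`, whose second
derivative is `-h`. The choice of `c` makes `u 1 = 0`, and `u → 0` at `0` because `Iˢh` is
continuous and vanishes at `0`.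
-/

open MeasureTheory Set

noncomputable def riemannLiouvilleIntegral (a : ℝ) (f : ℝ → ℝ) (x : ℝ) : ℝ :=
  (1 / Real.Gamma a) * ∫ t in (0:ℝ)..x, (x - t) ^ (a - 1) * f t

section
variable {a b z : ℝ} {f g : ℝ → ℝ}

theorem integral_rpow_mul_sub_rpow (ha : 0 < a) (hb : 0 < b) (hz : 0 < z) :
    ∫ t in (0:ℝ)..z, t ^ (a - 1) * (z - t) ^ (b - 1) =
      z ^ (a + b - 1) * ProbabilityTheory.beta a b := by
  apply Complex.ofReal_injective
  have hbeta := Complex.betaIntegral_scaled a b hz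
  rw [Complex.betaIntegral_eq_Gamma_mul_div _ _ (by simpa) (by simpa)] at hbeta
  rw [← intervalIntegral.integral_ofReal, ProbabilityTheory.beta]
  push_cast [Complex.ofReal_cpow hz.le, ← Complex.Gamma_ofReal, ← hbeta]
  refine intervalIntegral.integral_congr fun t ht => ?_
  rw [uIcc_of_le hz.le] at ht
  push_cast [Complex.ofReal_cpow ht.1, Complex.ofReal_cpow (sub_nonneg.2 ht.2)]
  rfl

theorem integral_sub_rpow_mul_sub_rpow (ha : 0 < a) (hb : 0 < b) {r : ℝ} (hrz : r < z) :
    ∫ t in r..z, (z - t) ^ (b - 1) * (t - r) ^ (a - 1) =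
      (z - r) ^ (a + b - 1) * ProbabilityTheory.beta a b := by
  have hshift := intervalIntegral.integral_comp_sub_right
    (fun t => t ^ (a - 1) * (z - r - t) ^ (b - 1)) r (a := r) (b := z)
  simp only [sub_self, sub_sub_sub_cancel_right] at hshift
  rw [← integral_rpow_mul_sub_rpow ha hb (sub_pos.2 hrz), ← hshift]
  simp only [mul_comm]

theorem riemannLiouvilleIntegral_rpow (ha : 0 < a) (hb : 0 < b) (hz : 0 < z) :
    riemannLiouvilleIntegral b (fun t => t ^ (a - 1)) z =
      Real.Gamma a / Real.Gamma (a + b) * z ^ (a + b - 1) := by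
  have hbeta := integral_sub_rpow_mul_sub_rpow ha hb hz
  simp only [sub_zero] at hbeta
  rw [riemannLiouvilleIntegral, hbeta, ProbabilityTheory.beta]
  have hΓb := (Real.Gamma_pos_of_pos hb).ne'
  field_simp

theorem continuous_riemannLiouvilleIntegral (ha : 1 ≤ a) (hf : Continuous f) :
    Continuous (riemannLiouvilleIntegral a f) := by
  have : 0 ≤ a - 1 := by linarith
  unfold riemannLiouvilleIntegral
  fun_prop (disch := assumption)

theorem riemannLiouvilleIntegral_congr (hz : 0 ≤ z) (hfg : EqOn f g (Icc 0 z)) :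
    riemannLiouvilleIntegral a f z = riemannLiouvilleIntegral a g z := by
  unfold riemannLiouvilleIntegral
  congr 1
  refine intervalIntegral.integral_congr fun t ht => ?_
  rw [uIcc_of_le hz] at ht
  rw [hfg ht]

theorem intervalIntegrable_sub_rpow (hb : 0 < b) :
    IntervalIntegrable (fun t => (z - t) ^ (b - 1)) volume 0 z := by
  simpa using ((intervalIntegral.intervalIntegrable_rpow' (by linarith : -1 < b - 1)).comp_sub_left
    z (a := 0) (b := z)).symm

theorem intervalIntegrable_sub_rpow_mul (hb : 0 < b) (hf : ContinuousOn f (uIcc 0 z)) :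
    IntervalIntegrable (fun t => (z - t) ^ (b - 1) * f t) volume 0 z :=
  (intervalIntegrable_sub_rpow hb).mul_continuousOn hf

theorem riemannLiouvilleIntegral_const_mul_sub (hb : 0 < b) (hf : ContinuousOn f (uIcc 0 z))
    (hg : ContinuousOn g (uIcc 0 z)) (c : ℝ) :
    riemannLiouvilleIntegral b (fun t => c * f t - g t) z =
      c * riemannLiouvilleIntegral b f z - riemannLiouvilleIntegral b g z := by
  have hsplit : ∫ t in (0:ℝ)..z, (z - t) ^ (b - 1) * (c * f t - g t) =
      c * (∫ t in (0:ℝ)..z, (z - t) ^ (b - 1) * f t) -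
        ∫ t in (0:ℝ)..z, (z - t) ^ (b - 1) * g t := by
    rw [← intervalIntegral.integral_const_mul, ← intervalIntegral.integral_sub
      ((intervalIntegrable_sub_rpow_mul hb hf).const_mul c)
      (intervalIntegrable_sub_rpow_mul hb hg)]
    exact intervalIntegral.integral_congr fun t _ => by ring
  simp only [riemannLiouvilleIntegral, hsplit]
  ring

theorem hasDerivAt_riemannLiouvilleIntegral_two (hf : Continuous f) (x : ℝ) :
    HasDerivAt (riemannLiouvilleIntegral 2 f) (∫ t in (0:ℝ)..x, f t) x := by
  have hmul : Continuous fun t => t * f t := by fun_prop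
  have hsplit : riemannLiouvilleIntegral 2 f =
      fun z => z * (∫ t in (0:ℝ)..z, f t) - ∫ t in (0:ℝ)..z, t * f t := by
    funext z
    simp only [riemannLiouvilleIntegral, Real.Gamma_two, div_one, one_mul,
      show (2:ℝ) - 1 = 1 by norm_num, Real.rpow_one]
    rw [← intervalIntegral.integral_const_mul, ← intervalIntegral.integral_sub
      ((hf.const_mul z).intervalIntegrable 0 z) (hmul.intervalIntegrable 0 z)]
    exact intervalIntegral.integral_congr fun t _ => by ring
  rw [hsplit]
  have hF := (hf.integral_hasStrictDerivAt 0 x).hasDerivAt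
  have hG := (hmul.integral_hasStrictDerivAt 0 x).hasDerivAt
  exact (((hasDerivAt_id' x).mul hF).sub hG).congr_deriv (by ring)

theorem integrableOn_sub_rpow_mul_sub_rpow_mul (ha : 1 ≤ a) (hb : 0 < b) (hf : Continuous f) :
    IntegrableOn (fun p : ℝ × ℝ => (z - p.1) ^ (b - 1) * ((p.1 - p.2) ^ (a - 1) * f p.2))
      (Ioc 0 z ×ˢ Ioc 0 z) := by
  obtain ⟨M, hM⟩ :=
    (isCompact_Icc (a := (0:ℝ)) (b := z)).exists_bound_of_continuousOn hf.continuousOn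
  have hdom : IntegrableOn (fun p : ℝ × ℝ => (z - p.1) ^ (b - 1) * (z ^ (a - 1) * M))
      (Ioc 0 z ×ˢ Ioc 0 z) := by
    rw [IntegrableOn, Measure.volume_eq_prod, ← Measure.prod_restrict]
    exact Integrable.mul_prod (g := fun _ => z ^ (a - 1) * M)
      ((intervalIntegrable_iff.1 (intervalIntegrable_sub_rpow hb)).mono_set Ioc_subset_uIoc)
      (integrable_const _)
  have hmeas := hf.measurable
  refine hdom.mono' (by fun_prop : Measurable _).aestronglyMeasurable
    ((ae_restrict_iff' (measurableSet_Ioc.prod measurableSet_Ioc)).2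
      (Filter.Eventually.of_forall fun p hp => ?_))
  obtain ⟨⟨ht0, htz⟩, ⟨hr0, hrz⟩⟩ := hp
  -- for `r > t` the base is negative; `Real.rpow` is still bounded by `|t - r| ^ (a - 1)` there
  have hdiff : |p.1 - p.2| ^ (a - 1) ≤ z ^ (a - 1) :=
    Real.rpow_le_rpow (abs_nonneg _) (abs_sub_le_iff.2 ⟨by linarith, by linarith⟩) (by linarith)
  rw [norm_mul, norm_mul, Real.norm_of_nonneg (Real.rpow_nonneg (sub_nonneg.2 htz) _)]
  refine mul_le_mul_of_nonneg_left (mul_le_mul ?_ (hM p.2 ⟨hr0.le, hrz⟩) (norm_nonneg _)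
    (Real.rpow_nonneg (ht0.le.trans htz) _)) (Real.rpow_nonneg (sub_nonneg.2 htz) _)
  exact (Real.abs_rpow_le_abs_rpow _ _).trans hdiff

theorem integral_sub_rpow_mul_integral_sub_rpow (ha : 1 ≤ a) (hb : 0 < b) (hf : Continuous f)
    (hz : 0 < z) :
    ∫ t in (0:ℝ)..z, (z - t) ^ (b - 1) * ∫ r in (0:ℝ)..t, (t - r) ^ (a - 1) * f r =
      ProbabilityTheory.beta a b * ∫ r in (0:ℝ)..z, (z - r) ^ (a + b - 1) * f r := by
  set K : ℝ → ℝ → ℝ := fun t r => (z - t) ^ (b - 1) * ((t - r) ^ (a - 1) * f r)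
  -- the integrand on the triangle `0 < r ≤ t ≤ z`, seen as a function on the square
  set T : ℝ → ℝ → ℝ := fun t r => (Iic t).indicator (K t) r
  have hT : IntegrableOn (Function.uncurry T) (uIoc 0 z ×ˢ uIoc 0 z) := by
    rw [uIoc_of_le hz.le]
    exact (integrableOn_sub_rpow_mul_sub_rpow_mul ha hb hf).indicator
      (measurableSet_le measurable_snd measurable_fst)
  have hslice_t : ∀ t ∈ Ioc 0 z,
      ∫ r in (0:ℝ)..z, T t r =
        (z - t) ^ (b - 1) * ∫ r in (0:ℝ)..t, (t - r) ^ (a - 1) * f r := by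
    intro t ht
    rw [intervalIntegral.integral_of_le hz.le, integral_indicator measurableSet_Iic,
      Measure.restrict_restrict measurableSet_Iic, Iic_inter_Ioc_of_le ht.2,
      ← intervalIntegral.integral_of_le ht.1.le, ← intervalIntegral.integral_const_mul]
  have hslice_r : ∀ r ∈ Ioc 0 z,
      ∫ t in (0:ℝ)..z, T t r = ProbabilityTheory.beta a b * ((z - r) ^ (a + b - 1) * f r) := by
    intro r hr
    have hTr : (fun t => T t r) = (Ici r).indicator (fun t => K t r) := by
      ext t
      simp only [T, indicator_apply, mem_Iic, mem_Ici]
    have hset : Ici r ∩ Ioc 0 z = Icc r z := by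
      ext t
      simp only [mem_inter_iff, mem_Ici, mem_Ioc, mem_Icc]
      constructor
      · exact fun h => ⟨h.1, h.2.2⟩
      · exact fun h => ⟨h.1, hr.1.trans_le h.1, h.2⟩
    rw [hTr, intervalIntegral.integral_of_le hz.le, integral_indicator measurableSet_Ici,
      Measure.restrict_restrict measurableSet_Ici, hset, integral_Icc_eq_integral_Ioc,
      ← intervalIntegral.integral_of_le hr.2]
    rcases hr.2.lt_or_eq with hrz | rfl
    · simp only [K, ← mul_assoc]
      rw [intervalIntegral.integral_mul_const, integral_sub_rpow_mul_sub_rpow (by linarith) hb hrz]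
      ring
    · rw [intervalIntegral.integral_same, sub_self, Real.zero_rpow (by linarith), zero_mul,
        mul_zero]
  calc ∫ t in (0:ℝ)..z, (z - t) ^ (b - 1) * ∫ r in (0:ℝ)..t, (t - r) ^ (a - 1) * f r
      = ∫ t in (0:ℝ)..z, ∫ r in (0:ℝ)..z, T t r :=
        intervalIntegral.integral_congr_ae (Filter.Eventually.of_forall fun t ht =>
          (hslice_t t (by rwa [uIoc_of_le hz.le] at ht)).symm)
    _ = ∫ r in (0:ℝ)..z, ∫ t in (0:ℝ)..z, T t r := intervalIntegral_intervalIntegral_swap hT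
    _ = ∫ r in (0:ℝ)..z, ProbabilityTheory.beta a b * ((z - r) ^ (a + b - 1) * f r) :=
        intervalIntegral.integral_congr_ae (Filter.Eventually.of_forall fun r hr =>
          hslice_r r (by rwa [uIoc_of_le hz.le] at hr))
    _ = _ := intervalIntegral.integral_const_mul _ _

theorem riemannLiouvilleIntegral_riemannLiouvilleIntegral (ha : 1 ≤ a) (hb : 0 < b)
    (hf : Continuous f) (hz : 0 < z) :
    riemannLiouvilleIntegral b (riemannLiouvilleIntegral a f) z =
      riemannLiouvilleIntegral (a + b) f z := by
  have hΓa := (Real.Gamma_pos_of_pos (by linarith : 0 < a)).ne'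
  have hΓb := (Real.Gamma_pos_of_pos hb).ne'
  simp only [riemannLiouvilleIntegral, mul_left_comm _ (1 / Real.Gamma a),
    intervalIntegral.integral_const_mul]
  rw [integral_sub_rpow_mul_integral_sub_rpow ha hb hf hz, ProbabilityTheory.beta]
  field_simp

theorem hasDerivAt_riemannLiouvilleIntegral_two_sub {s c x : ℝ} (hs1 : 1 < s) (hs2 : s < 2)
    (hf : Continuous f) (hx : 0 < x) :
    HasDerivAt
      (riemannLiouvilleIntegral (2 - s) fun t => c * t ^ (s - 1) - riemannLiouvilleIntegral s f t)
      (c * Real.Gamma s - ∫ t in (0:ℝ)..x, f t) x := by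
  have hpow : Continuous fun t : ℝ => t ^ (s - 1) := Real.continuous_rpow_const (by linarith)
  have hI : ∀ z > 0, riemannLiouvilleIntegral (2 - s)
      (fun t => c * t ^ (s - 1) - riemannLiouvilleIntegral s f t) z =
      c * Real.Gamma s * z - riemannLiouvilleIntegral 2 f z := by
    intro z hz
    rw [riemannLiouvilleIntegral_const_mul_sub (by linarith) hpow.continuousOn
        (continuous_riemannLiouvilleIntegral hs1.le hf).continuousOn,
      riemannLiouvilleIntegral_rpow (by linarith) (by linarith) hz,
      riemannLiouvilleIntegral_riemannLiouvilleIntegral hs1.le (by linarith) hf hz]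
    simp only [show s + (2 - s) = 2 by ring, Real.Gamma_two, show (2:ℝ) - 1 = 1 by norm_num,
      Real.rpow_one, div_one]
    ring
  refine ((((hasDerivAt_id' x).const_mul (c * Real.Gamma s)).sub
    (hasDerivAt_riemannLiouvilleIntegral_two hf x)).congr_deriv (by ring)).congr_of_eventuallyEq ?_
  filter_upwards [Ioi_mem_nhds hx] with z hz using hI z hz

end

/-- Solution representation for the Riemann–Liouville two-point boundary value problem:
for `1 < s < 2`, `h` continuous on `[0,1]`, `c = (1/Γ(s)) ∫₀¹ (1-t)^{s-1} h t dt` and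
`u x = c x^{s-1} - (1/Γ(s)) ∫₀ˣ (x-t)^{s-1} h t dt`, one has `u 1 = 0`, `u x → 0` as
`x → 0⁺`, and the function `x ↦ (1/Γ(2-s)) ∫₀ˣ (x-t)^{1-s} u t dt` is twice
differentiable on `(0,1)` with second derivative `-h`; i.e. `(₀ᴿDₓˢ u)(x) = -h x`. -/
theorem rl_bvp_solution_representation (s : ℝ) (hs1 : 1 < s) (hs2 : s < 2)
    (h : ℝ → ℝ) (hc : ContinuousOn h (Set.Icc 0 1))
    (c : ℝ) (hcdef : c = (1 / Real.Gamma s) * ∫ t in (0:ℝ)..1, (1 - t) ^ (s - 1) * h t)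
    (u : ℝ → ℝ)
    (hu : ∀ x, u x = c * x ^ (s - 1)
      - (1 / Real.Gamma s) * ∫ t in (0:ℝ)..x, (x - t) ^ (s - 1) * h t) :
    u 1 = 0 ∧
    Filter.Tendsto u (nhdsWithin 0 (Set.Ioi 0)) (nhds 0) ∧
    ∃ I' : ℝ → ℝ,
      (∀ x ∈ Set.Ioo (0:ℝ) 1,
        HasDerivAt (fun z => (1 / Real.Gamma (2 - s)) * ∫ t in (0:ℝ)..z, (z - t) ^ (1 - s) * u t)
          (I' x) x) ∧
      (∀ x ∈ Set.Ioo (0:ℝ) 1, HasDerivAt I' (-h x) x) := by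
  obtain ⟨H, hH, hHh⟩ : ∃ H : ℝ → ℝ, Continuous H ∧ EqOn H h (Icc 0 1) :=
    ⟨IccExtend zero_le_one ((Icc 0 1).domRestrict h), continuous_IccExtend_iff.2 hc.domRestrict,
      fun x hx => IccExtend_of_mem _ _ hx⟩
  set v : ℝ → ℝ := fun x => c * x ^ (s - 1) - riemannLiouvilleIntegral s H x
  have huv : EqOn u v (Icc 0 1) := fun x hx => by
    rw [hu]
    change _ = c * x ^ (s - 1) - riemannLiouvilleIntegral s H x
    rw [riemannLiouvilleIntegral_congr hx.1 (hHh.mono (Icc_subset_Icc le_rfl hx.2))]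
    rfl
  refine ⟨by simp [hu, hcdef], ?_, fun x => c * Real.Gamma s - ∫ t in (0:ℝ)..x, H t,
    fun x hx => ?_, fun x hx => ?_⟩
  · have hv : Continuous v := (continuous_const.mul (Real.continuous_rpow_const (by linarith))).sub
      (continuous_riemannLiouvilleIntegral hs1.le hH)
    have hv0 : v 0 = 0 := by
      simp [v, riemannLiouvilleIntegral, Real.zero_rpow (by linarith : s - 1 ≠ 0)]
    refine ((hv0 ▸ hv.tendsto 0).mono_left nhdsWithin_le_nhds).congr' ?_
    filter_upwards [Ioo_mem_nhdsGT zero_lt_one] with x hx using (huv (Ioo_subset_Icc_self hx)).symm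
  · have hD : (fun z => 1 / Real.Gamma (2 - s) * ∫ t in (0:ℝ)..z, (z - t) ^ (1 - s) * u t) =
        riemannLiouvilleIntegral (2 - s) u := by
      funext z
      rw [riemannLiouvilleIntegral, show 2 - s - 1 = 1 - s by ring]
    rw [hD]
    refine (hasDerivAt_riemannLiouvilleIntegral_two_sub hs1 hs2 hH hx.1).congr_of_eventuallyEq ?_
    filter_upwards [isOpen_Ioo.mem_nhds hx] with z hz
    exact riemannLiouvilleIntegral_congr hz.1.le (huv.mono (Icc_subset_Icc le_rfl hz.2.le))
  · rw [← hHh (Ioo_subset_Icc_self hx)]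
    exact (hH.integral_hasStrictDerivAt 0 x).hasDerivAt.const_sub _
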